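/- (Key claim in the proof of Theorem 1) Let x, y ∈ ℤ × ℤ be unimodular pairs with |det(x,y)| ≥ 2 and fix ε ∈ {+1, −1}. Let p be a consistent path of sign ε from x to y whose length is minimal among all consistent paths of sign ε from x to y, and let q be any consistent path of sign ε from x to y. Then every vertex of p equals, up to sign, some vertex of q; that is, for each vertex z of p, either z or −z occurs as a vertex of q. -/

import Mathlib

/-!
Call a vertex of the cone *mandatory* if one of its neighbours in the distant graph lies in the
opposite cone. The edge joining the two separates `x` from `y`; since edges of the Farey
tessellation do not cross and a consistent path avoids the opposite cone, every consistent path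
passes through every mandatory vertex. The Farey (continued fraction) path from `x` to `y` is
consistent and all its interior vertices are mandatory. So a shortest consistent path has no room
for other vertices: its interior vertices are exactly the mandatory ones, which every consistent
path contains.
-/

/-- The determinant of two integer vectors in the plane. -/
def det (x y : ℤ × ℤ) : ℤ := x.1 * y.2 - x.2 * y.1

/-- A path of length `n` from `x` to `y` in the distant graph of `P(ℤ)`, given by its
sequence of vertices `z 0 = x, …, z n = y`: all vertices are unimodular pairs,
consecutive vertices are distant (`|det| = 1`), and distinct indices give distinct
projective points (`z i ≠ ± z j`). -/
def IsPath (x y : ℤ × ℤ) (n : ℕ) (z : ℕ → ℤ × ℤ) : Prop :=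
  z 0 = x ∧ z n = y ∧
  (∀ i, i ≤ n → Int.gcd (z i).1 (z i).2 = 1) ∧
  (∀ i, i < n → |det (z i) (z (i + 1))| = 1) ∧
  (∀ i j, i ≤ n → j ≤ n → i ≠ j → z i ≠ z j ∧ z i ≠ -z j)

/-- A consistent path of sign `ε` from `x` to `y`: a path all of whose intermediate
vertices `z i = α • x + β • y` (coefficients over `ℚ`) satisfy `ε * α * β > 0`, i.e. they
all lie in the same pair of opposite open cones determined by `x` and `y`. -/
def IsConsistentPath (x y : ℤ × ℤ) (ε : ℚ) (n : ℕ) (z : ℕ → ℤ × ℤ) : Prop :=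
  IsPath x y n z ∧
  ∀ i, 0 < i → i < n → ∃ α β : ℚ,
    ((z i).1 : ℚ) = α * x.1 + β * y.1 ∧ ((z i).2 : ℚ) = α * x.2 + β * y.2 ∧
    ε * (α * β) > 0

section DetAlgebra

variable (a b c d : ℤ × ℤ)

lemma det_self : det a a = 0 := by unfold det; ring

lemma det_swap : det a b = -det b a := by unfold det; ring

@[simp] lemma det_neg_left : det (-a) b = -det a b := by
  simp only [det, Prod.fst_neg, Prod.snd_neg]; ring

@[simp] lemma det_neg_right : det a (-b) = -det a b := by
  simp only [det, Prod.fst_neg, Prod.snd_neg]; ring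

lemma det_sub_right : det a (b - c) = det a b - det a c := by
  simp only [det, Prod.fst_sub, Prod.snd_sub]; ring

lemma det_sub_left : det (a - b) c = det a c - det b c := by
  simp only [det, Prod.fst_sub, Prod.snd_sub]; ring

/-- The Plücker relation for `2 × 2` determinants. -/
lemma det_mul_det_sub_det_mul_det :
    det a c * det d b - det b c * det d a = det d c * det a b := by unfold det; ring

end DetAlgebra

lemma gcd_neg_eq (a : ℤ × ℤ) : Int.gcd (-a).1 (-a).2 = Int.gcd a.1 a.2 := by
  simp [Int.gcd]

lemma gcd_eq_one_of_abs_det_eq_one {a b : ℤ × ℤ} (h : |det a b| = 1) :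
    Int.gcd a.1 a.2 = 1 := by
  have hdvd : (Int.gcd a.1 a.2 : ℤ) ∣ det a b :=
    dvd_sub (dvd_mul_of_dvd_left (Int.gcd_dvd_left _ _) _)
      (dvd_mul_of_dvd_left (Int.gcd_dvd_right _ _) _)
  rw [← dvd_abs, h] at hdvd
  exact_mod_cast Int.eq_one_of_dvd_one (by positivity) hdvd

lemma exists_det_eq_one {b : ℤ × ℤ} (hb : Int.gcd b.1 b.2 = 1) : ∃ a, det a b = 1 := by
  obtain ⟨s, t, hst⟩ := Int.isCoprime_iff_gcd_eq_one.mpr hb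
  exact ⟨(t, -s), by unfold det; linear_combination hst⟩

lemma eq_or_eq_neg_of_det_eq_zero {a b : ℤ × ℤ} (ha : Int.gcd a.1 a.2 = 1)
    (hb : Int.gcd b.1 b.2 = 1) (h : det a b = 0) : b = a ∨ b = -a := by
  obtain ⟨s, t, hst⟩ := Int.isCoprime_iff_gcd_eq_one.mpr ha
  set c := s * b.1 + t * b.2
  have h1 : b.1 = c * a.1 := by unfold det at h; linear_combination (-b.1) * hst - t * h
  have h2 : b.2 = c * a.2 := by unfold det at h; linear_combination (-b.2) * hst + s * h
  have hc : c.natAbs = 1 := by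
    rwa [h1, h2, Int.gcd_mul_left, ha, mul_one] at hb
  rcases Int.natAbs_eq_iff.mp hc with hc | hc
  · left; ext <;> simp [h1, h2, hc]
  · right; ext <;> simp [h1, h2, hc]

lemma eq_or_eq_neg_trans {G : Type*} [InvolutiveNeg G] {a b c : G} (hab : a = b ∨ a = -b)
    (hbc : b = c ∨ b = -c) : a = c ∨ a = -c := by
  rcases hab with rfl | rfl <;> rcases hbc with rfl | rfl <;> simp

lemma eq_or_eq_neg_symm {G : Type*} [InvolutiveNeg G] {a b : G} (h : a = b ∨ a = -b) :
    b = a ∨ b = -a := by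
  rcases h with rfl | rfl <;> simp

lemma exists_eq_zero_of_mul_neg {R : Type*} [CommRing R] [LinearOrder R] [IsStrictOrderedRing R]
    {g : ℕ → R} {n : ℕ} (hg : g 0 * g n < 0) (hstep : ∀ i < n, 0 ≤ g i * g (i + 1)) :
    ∃ j, 0 < j ∧ j < n ∧ g j = 0 := by
  induction n with
  | zero => exact absurd hg (mul_self_nonneg _).not_gt
  | succ n ih =>
    by_cases hn : g n = 0
    · rcases Nat.eq_zero_or_pos n with rfl | hpos
      · simp [hn] at hg
      · exact ⟨n, hpos, n.lt_succ_self, hn⟩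
    have hg' : g 0 * g n < 0 := by
      by_contra! h
      have := mul_neg_of_pos_of_neg (mul_self_pos.mpr hn) hg
      nlinarith [mul_nonneg h (hstep n n.lt_succ_self)]
    obtain ⟨j, hj0, hjn, hj⟩ := ih hg' fun i hi => hstep i (by omega)
    exact ⟨j, hj0, by omega, hj⟩

lemma Int.mul_nonneg_of_abs_sub_eq_one {a b : ℤ} (h : |a - b| = 1) : 0 ≤ a * b := by
  by_contra! hab
  rcases mul_neg_iff.mp hab with ⟨ha, hb⟩ | ⟨ha, hb⟩ <;>
    rcases abs_eq (zero_le_one' ℤ) |>.mp h with h | h <;> omega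

/-- Edges of the Farey tessellation do not cross. -/
lemma det_mul_det_nonneg_of_abs_det_eq_one {u v a b : ℤ × ℤ} (hvu : |det v u| = 1)
    (hab : |det a b| = 1) : 0 ≤ det a u * det v a * (det b u * det v b) := by
  have key : |det a u * det v b - det b u * det v a| = 1 := by
    rw [det_mul_det_sub_det_mul_det, abs_mul, hvu, hab, one_mul]
  linarith [Int.mul_nonneg_of_abs_sub_eq_one key]

/-- By Cramer's rule the coefficients of `z = α x + β y` are `α = det z y / det x y` and
`β = det x z / det x y`, so the sign of `α β` is that of `det z y * det x z`. -/
def InCone (x y : ℤ × ℤ) (ε : ℚ) (z : ℤ × ℤ) : Prop :=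
  0 < ε * (det z y * det x z : ℤ)

section Cone

variable {x y z : ℤ × ℤ} {ε : ℚ}

lemma inCone_comm : InCone y x ε z ↔ InCone x y ε z := by
  rw [InCone, InCone, det_swap z x, det_swap y z, neg_mul_neg, mul_comm (det x z)]

lemma inCone_neg_right : InCone x (-y) ε z ↔ InCone x y (-ε) z := by
  simp only [InCone, det_neg_right, neg_mul, Int.cast_neg, mul_neg]

@[simp] lemma inCone_neg : InCone x y ε (-z) ↔ InCone x y ε z := by
  simp only [InCone, det_neg_right, det_neg_left, neg_mul_neg]

lemma InCone.not_neg (h : InCone x y ε z) : ¬ InCone x y (-ε) z := by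
  unfold InCone at *
  linarith

lemma exists_coeffs_iff_inCone (hd : det x y ≠ 0) :
    (∃ α β : ℚ, (z.1 : ℚ) = α * x.1 + β * y.1 ∧ (z.2 : ℚ) = α * x.2 + β * y.2 ∧
      ε * (α * β) > 0) ↔ InCone x y ε z := by
  have hD : (0 : ℚ) < (det x y : ℚ) ^ 2 := by positivity
  constructor
  · rintro ⟨α, β, h1, h2, hαβ⟩
    have hα : (det z y : ℚ) = α * det x y := by
      unfold det; push_cast; linear_combination (y.2 : ℚ) * h1 - (y.1 : ℚ) * h2
    have hβ : (det x z : ℚ) = β * det x y := by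
      unfold det; push_cast; linear_combination (x.1 : ℚ) * h2 - (x.2 : ℚ) * h1
    rw [InCone, Int.cast_mul, hα, hβ]
    nlinarith [mul_pos hαβ hD]
  · intro h
    have hdq : (det x y : ℚ) ≠ 0 := by exact_mod_cast hd
    refine ⟨det z y / det x y, det x z / det x y, ?_, ?_, ?_⟩
    · field_simp; unfold det; push_cast; ring
    · field_simp; unfold det; push_cast; ring
    · rw [div_mul_div_comm, ← sq, mul_div_assoc', gt_iff_lt, div_pos_iff_of_pos_right hD]
      exact_mod_cast h

lemma isConsistentPath_iff (hd : det x y ≠ 0) {n : ℕ} {q : ℕ → ℤ × ℤ} :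
    IsConsistentPath x y ε n q ↔
      IsPath x y n q ∧ ∀ i, 0 < i → i < n → InCone x y ε (q i) := by
  simp only [IsConsistentPath, exists_coeffs_iff_inCone hd]

end Cone

def IsMandatory (x y : ℤ × ℤ) (ε : ℚ) (v : ℤ × ℤ) : Prop :=
  InCone x y ε v ∧ ∃ u, |det v u| = 1 ∧ InCone x y (-ε) u

section Mandatory

variable {x y v : ℤ × ℤ} {ε : ℚ}

lemma isMandatory_comm : IsMandatory y x ε v ↔ IsMandatory x y ε v := by
  simp only [IsMandatory, inCone_comm]

lemma isMandatory_neg_right : IsMandatory x (-y) ε v ↔ IsMandatory x y (-ε) v := by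
  simp only [IsMandatory, inCone_neg_right, neg_neg]

/-- The edge from `v` to its neighbour `u` separates `x` from `y`, and a path in the cone can
neither cross that edge nor pass through `± u`. -/
lemma IsPath.exists_eq_or_eq_neg_of_isMandatory {n : ℕ} {q : ℕ → ℤ × ℤ}
    (hq : IsPath x y n q)
    (hqc : ∀ i, 0 < i → i < n → InCone x y ε (q i)) (hv : IsMandatory x y ε v) :
    ∃ j, 0 < j ∧ j < n ∧ (q j = v ∨ q j = -v) := by
  obtain ⟨hq0, hqn, hqu, hqd, -⟩ := hq
  obtain ⟨hvc, u, hvu, huc⟩ := hv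
  have hsign : det (q 0) u * det v (q 0) * (det (q n) u * det v (q n)) < 0 := by
    have hq : det v y * det x v * (det u y * det x u) < 0 := by
      unfold InCone at hvc huc; push_cast at hvc huc
      exact_mod_cast (by nlinarith [mul_pos hvc huc, sq_nonneg ε] :
        (det v y * det x v : ℚ) * (det u y * det x u) < 0)
    rw [hq0, hqn, det_swap v x, det_swap y u]
    convert hq using 1
    ring
  obtain ⟨j, hj0, hjn, hj⟩ := exists_eq_zero_of_mul_neg hsign
    fun i hi => det_mul_det_nonneg_of_abs_det_eq_one hvu (hqd i hi)
  refine ⟨j, hj0, hjn, ?_⟩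
  have hu : Int.gcd u.1 u.2 = 1 := gcd_eq_one_of_abs_det_eq_one (by rwa [det_swap, abs_neg])
  rcases mul_eq_zero.mp hj with h | h
  · rcases eq_or_eq_neg_of_det_eq_zero (hqu j hjn.le) hu h with rfl | rfl
    · exact absurd huc (hqc j hj0 hjn).not_neg
    · exact absurd (inCone_neg.mp huc) (hqc j hj0 hjn).not_neg
  · exact eq_or_eq_neg_of_det_eq_zero (gcd_eq_one_of_abs_det_eq_one hvu) (hqu j hjn.le) h

end Mandatory

lemma IsPath.exists_eq_or_eq_neg_of_le {x y : ℤ × ℤ} {n m : ℕ} {v p : ℕ → ℤ × ℤ}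
    (hv : IsPath x y n v) (hmn : m ≤ n)
    (hvp : ∀ l, 0 < l → l < n → ∃ j, 0 < j ∧ j < m ∧ (p j = v l ∨ p j = -v l))
    {i : ℕ} (hi0 : 0 < i) (him : i < m) :
    ∃ l, 0 < l ∧ l < n ∧ (p i = v l ∨ p i = -v l) := by
  choose! ψ hψ using hvp
  have hmaps : Set.MapsTo ψ (Finset.Ioo 0 n) (Finset.Ioo 0 m) := fun l hl => by
    simp only [Finset.coe_Ioo, Set.mem_Ioo] at hl ⊢
    exact ⟨(hψ l hl.1 hl.2).1, (hψ l hl.1 hl.2).2.1⟩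
  have hinj : Set.InjOn ψ (Finset.Ioo 0 n) := fun a ha b hb hab => by
    simp only [Finset.coe_Ioo, Set.mem_Ioo] at ha hb
    by_contra hne
    have hvab := hv.2.2.2.2 a b ha.2.le hb.2.le hne
    rcases eq_or_eq_neg_trans (eq_or_eq_neg_symm (hψ a ha.1 ha.2).2.2)
      (hab ▸ (hψ b hb.1 hb.2).2.2) with h | h
    exacts [hvab.1 h, hvab.2 h]
  obtain ⟨l, hl, hli⟩ := Finset.surjOn_of_injOn_of_card_le ψ hmaps hinj
    (by simp only [Nat.card_Ioo]; omega) (by simpa using ⟨hi0, him⟩ : i ∈ Finset.Ioo 0 m)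
  simp only [Finset.coe_Ioo, Set.mem_Ioo] at hl
  exact ⟨l, hl.1, hl.2, hli ▸ (hψ l hl.1 hl.2).2.2⟩

structure IsFareyPath (x y : ℤ × ℤ) (n : ℕ) (v : ℕ → ℤ × ℤ) : Prop where
  zero : v 0 = x
  last : v n = y
  det_succ : ∀ i < n, det (v i) (v (i + 1)) = 1
  det_left_lt : ∀ i < n, det x (v i) < det x (v (i + 1))
  det_right_lt : ∀ i < n, det (v (i + 1)) y < det (v i) y

namespace IsFareyPath

variable {x y z : ℤ × ℤ} {n : ℕ} {v : ℕ → ℤ × ℤ}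

lemma refl (x : ℤ × ℤ) : IsFareyPath x x 0 fun _ => x :=
  ⟨rfl, rfl, nofun, nofun, nofun⟩

lemma strictMonoOn_det_left (h : IsFareyPath x y n v) :
    StrictMonoOn (fun i => det x (v i)) (Set.Iic n) :=
  strictMonoOn_Iic_of_lt_succ h.det_left_lt

lemma strictAntiOn_det_right (h : IsFareyPath x y n v) :
    StrictAntiOn (fun i => det (v i) y) (Set.Iic n) :=
  strictAntiOn_Iic_of_succ_lt h.det_right_lt

lemma det_left_nonneg (h : IsFareyPath x y n v) {i : ℕ} (hi : i ≤ n) : 0 ≤ det x (v i) := by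
  simpa [h.zero, det_self] using
    h.strictMonoOn_det_left.monotoneOn (Set.mem_Iic.2 (Nat.zero_le n)) hi (Nat.zero_le i)

lemma det_left_le (h : IsFareyPath x y n v) {i : ℕ} (hi : i ≤ n) : det x (v i) ≤ det x y := by
  simpa [h.last] using h.strictMonoOn_det_left.monotoneOn hi (Set.mem_Iic.2 le_rfl) hi

lemma snoc (h : IsFareyPath x z n v) (hzy : det z y = 1) (hlt : det x z < det x y) :
    IsFareyPath x y (n + 1) fun i => if i ≤ n then v i else y := by
  have hv : ∀ i ≤ n, (if i ≤ n then v i else y) = v i := fun i hi => if_pos hi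
  have hvn : (if n + 1 ≤ n then v (n + 1) else y) = y := if_neg (by omega)
  refine ⟨by simp [h.zero], by simp, fun i hi => ?_, fun i hi => ?_, fun i hi => ?_⟩ <;>
    rcases (Nat.lt_succ_iff.mp hi).lt_or_eq with hi | rfl
  · rw [hv i hi.le, hv (i + 1) hi]; exact h.det_succ i hi
  · rw [hv i le_rfl, hvn, h.last]; exact hzy
  · rw [hv i hi.le, hv (i + 1) hi]; exact h.det_left_lt i hi
  · rw [hv i le_rfl, hvn, h.last]; exact hlt
  · rw [hv i hi.le, hv (i + 1) hi]
    have plucker : ∀ w, det x z * det w y = det x y * det w z + det x w := fun w => by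
      unfold det at hzy ⊢; linear_combination (x.1 * w.2 - x.2 * w.1) * hzy
    have hxz : 0 ≤ det x z := (h.det_left_nonneg hi.le).trans (h.det_left_le hi.le)
    have key : 0 < det x z * (det (v i) y - det (v (i + 1)) y) := by
      have hD : 0 ≤ det x y := hxz.trans hlt.le
      have := le_mul_of_one_le_right hD (by linarith [h.det_right_lt i hi] :
        1 ≤ det (v i) z - det (v (i + 1)) z)
      rw [mul_sub, plucker, plucker]
      linarith [h.det_left_nonneg hi.le, h.det_left_le hi]
    exact sub_pos.mp (pos_of_mul_pos_right key hxz)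
  · rw [hv i le_rfl, hvn, h.last, det_self, hzy]; exact one_pos

lemma isPath (h : IsFareyPath x y n v) (hy : Int.gcd y.1 y.2 = 1) : IsPath x y n v := by
  refine ⟨h.zero, h.last, fun i hi => ?_, fun i hi => by rw [h.det_succ i hi, abs_one],
    fun i j hi hj hij => ?_⟩
  · rcases hi.lt_or_eq with hi | rfl
    · exact gcd_eq_one_of_abs_det_eq_one (by rw [h.det_succ i hi, abs_one])
    · rwa [h.last]
  · have hne : det x (v i) ≠ det x (v j) := h.strictMonoOn_det_left.injOn.ne hi hj hij
    refine ⟨fun heq => hne (by rw [heq]), fun heq => hne ?_⟩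
    have := h.det_left_nonneg hi
    have := h.det_left_nonneg hj
    rw [heq, det_neg_right] at *
    omega

/-- The neighbour `v (i + 1) - v i` of `v i` lies in the opposite cone. -/
lemma isMandatory (h : IsFareyPath x y n v) {i : ℕ} (hi0 : 0 < i) (hin : i < n) :
    IsMandatory x y 1 (v i) := by
  have hx : 0 < det x (v i) := by
    simpa [h.zero, det_self] using h.strictMonoOn_det_left (Nat.zero_le n) hin.le hi0
  have hy : 0 < det (v i) y := by
    simpa [h.last, det_self] using h.strictAntiOn_det_right hin.le (le_refl n) hin
  refine ⟨by unfold InCone; exact_mod_cast by positivity, v (i + 1) - v i, ?_, ?_⟩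
  · rw [det_sub_right, h.det_succ i hin, det_self, sub_zero, abs_one]
  · have hneg : det (v (i + 1) - v i) y * det x (v (i + 1) - v i) < 0 := by
      rw [det_sub_left, det_sub_right]
      nlinarith [h.det_right_lt i hin, h.det_left_lt i hin]
    unfold InCone
    have : ((det (v (i + 1) - v i) y * det x (v (i + 1) - v i) : ℤ) : ℚ) < 0 := by
      exact_mod_cast hneg
    linarith

end IsFareyPath

lemma exists_det_eq_one_of_pos {x y : ℤ × ℤ} (hy : Int.gcd y.1 y.2 = 1) (hD : 0 < det x y) :
    ∃ z, det z y = 1 ∧ 0 ≤ det x z ∧ det x z < det x y := by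
  obtain ⟨z, hz⟩ := exists_det_eq_one hy
  refine ⟨(z.1 - det x z / det x y * y.1, z.2 - det x z / det x y * y.2), ?_, ?_⟩
  · unfold det at hz ⊢; linear_combination hz
  · have e : det x (z.1 - det x z / det x y * y.1, z.2 - det x z / det x y * y.2) =
        det x z % det x y := by
      rw [Int.emod_def]; unfold det; ring
    rw [e]
    exact ⟨Int.emod_nonneg _ hD.ne', Int.emod_lt_of_pos _ hD⟩

/-- The Farey path is built backwards from `y`: its last interior vertex is the neighbour `z`
of `y` with `0 ≤ det x z < det x y`. -/
lemma exists_isFareyPath {x y : ℤ × ℤ} (hx : Int.gcd x.1 x.2 = 1) (hy : Int.gcd y.1 y.2 = 1)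
    (hD : 0 < det x y) : ∃ n v, IsFareyPath x y n v := by
  induction hN : (det x y).toNat using Nat.strong_induction_on generalizing y with
  | _ N ih =>
  obtain ⟨z, hzy, hxz0, hxz⟩ := exists_det_eq_one_of_pos hy hD
  have hz : Int.gcd z.1 z.2 = 1 := gcd_eq_one_of_abs_det_eq_one (by rw [hzy, abs_one])
  obtain ⟨n, v, hv⟩ : ∃ n v, IsFareyPath x z n v := by
    rcases hxz0.eq_or_lt with h | h
    · rcases eq_or_eq_neg_of_det_eq_zero hx hz h.symm with rfl | rfl
      · exact ⟨0, _, IsFareyPath.refl z⟩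
      · rw [det_neg_left] at hzy; omega
    · exact ih _ (by omega) hz h rfl
  exact ⟨n + 1, _, hv.snoc hzy hxz⟩

section Paths

variable {x y : ℤ × ℤ} {n : ℕ} {v : ℕ → ℤ × ℤ}

lemma IsPath.reverse (h : IsPath x y n v) : IsPath y x n fun i => v (n - i) := by
  obtain ⟨h0, hn, hu, hd, hdist⟩ := h
  refine ⟨by simpa using hn, by simpa using h0, fun i _ => hu _ (Nat.sub_le n i),
    fun i hi => ?_, fun i j _ _ hij => hdist _ _ (Nat.sub_le n i) (Nat.sub_le n j) (by omega)⟩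
  have hstep := hd (n - (i + 1)) (by omega)
  rwa [show n - (i + 1) + 1 = n - i by omega, det_swap, abs_neg] at hstep

lemma IsPath.of_eq_or_eq_neg {w : ℕ → ℤ × ℤ} (h : IsPath x y n v)
    (hw : ∀ i, w i = v i ∨ w i = -v i) : IsPath (w 0) (w n) n w := by
  obtain ⟨-, -, hu, hd, hdist⟩ := h
  refine ⟨rfl, rfl, fun i hi => ?_, fun i hi => ?_, fun i j hi hj hij => ?_⟩
  · rcases hw i with h | h <;> rw [h]
    exacts [hu i hi, (gcd_neg_eq _).trans (hu i hi)]
  · rcases hw i with h | h <;> rcases hw (i + 1) with h' | h' <;>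
      simpa [h, h'] using hd i hi
  · have := hdist i j hi hj hij
    rcases hw i with h | h <;> rcases hw j with h' | h' <;>
      simpa [h, h', neg_eq_iff_eq_neg, and_comm] using this

lemma IsPath.neg_right (h : IsPath x y n v) (hxy : x ≠ y) :
    IsPath x (-y) n fun i => if i = n then -y else v i := by
  have hn0 : n ≠ 0 := by rintro rfl; exact hxy (h.1 ▸ h.2.1)
  simpa [Ne.symm hn0, h.1] using h.of_eq_or_eq_neg (w := fun i => if i = n then -y else v i)
    fun i => by
      split_ifs with hi
      · exact Or.inr (by rw [hi, h.2.1])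
      · exact Or.inl rfl

end Paths

def HasMandatoryPath (x y : ℤ × ℤ) (ε : ℚ) : Prop :=
  ∃ n v, IsPath x y n v ∧ ∀ i, 0 < i → i < n → IsMandatory x y ε (v i)

section MandatoryPath

variable {x y : ℤ × ℤ} {ε : ℚ}

lemma HasMandatoryPath.symm (h : HasMandatoryPath x y ε) : HasMandatoryPath y x ε := by
  obtain ⟨n, v, hv, hm⟩ := h
  exact ⟨n, _, hv.reverse, fun i hi0 hin => isMandatory_comm.2 (hm _ (by omega) (by omega))⟩

lemma HasMandatoryPath.neg_right (h : HasMandatoryPath x y ε) (hxy : x ≠ y) :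
    HasMandatoryPath x (-y) (-ε) := by
  obtain ⟨n, v, hv, hm⟩ := h
  refine ⟨n, _, hv.neg_right hxy, fun i hi0 hin => ?_⟩
  rw [if_neg hin.ne, isMandatory_neg_right, neg_neg]
  exact hm i hi0 hin

lemma hasMandatoryPath_of_pos (hx : Int.gcd x.1 x.2 = 1) (hy : Int.gcd y.1 y.2 = 1)
    (hD : 0 < det x y) : HasMandatoryPath x y 1 := by
  obtain ⟨n, v, hv⟩ := exists_isFareyPath hx hy hD
  exact ⟨n, v, hv.isPath hy, fun i => hv.isMandatory⟩

lemma hasMandatoryPath_one (hx : Int.gcd x.1 x.2 = 1) (hy : Int.gcd y.1 y.2 = 1)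
    (hD : det x y ≠ 0) : HasMandatoryPath x y 1 := by
  rcases hD.lt_or_gt with hD | hD
  · exact (hasMandatoryPath_of_pos hy hx (by rw [det_swap]; omega)).symm
  · exact hasMandatoryPath_of_pos hx hy hD

lemma hasMandatoryPath (hx : Int.gcd x.1 x.2 = 1) (hy : Int.gcd y.1 y.2 = 1)
    (hD : det x y ≠ 0) (hε : ε = 1 ∨ ε = -1) : HasMandatoryPath x y ε := by
  rcases hε with rfl | rfl
  · exact hasMandatoryPath_one hx hy hD
  · have hxy : x ≠ -y := by rintro rfl; simp [det_self] at hD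
    simpa using (hasMandatoryPath_one hx ((gcd_neg_eq y).trans hy)
      (by simpa using hD)).neg_right hxy

end MandatoryPath

/-- Key claim in the proof of Theorem 1: if `p` is a shortest consistent path of sign `ε`
from `x` to `y` and `q` is any consistent path of sign `ε` from `x` to `y`, then every
vertex of `p` occurs, up to sign, among the vertices of `q`. -/
theorem shortest_consistent_path_subset (x y : ℤ × ℤ)
    (hx : Int.gcd x.1 x.2 = 1) (hy : Int.gcd y.1 y.2 = 1)
    (hdet : 2 ≤ |det x y|) (ε : ℚ) (hε : ε = 1 ∨ ε = -1)
    (np : ℕ) (p : ℕ → ℤ × ℤ) (hp : IsConsistentPath x y ε np p)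
    (hpmin : ∀ m w, IsConsistentPath x y ε m w → np ≤ m)
    (nq : ℕ) (q : ℕ → ℤ × ℤ) (hq : IsConsistentPath x y ε nq q) :
    ∀ i ≤ np, ∃ j ≤ nq, p i = q j ∨ p i = -q j := by
  have hD : det x y ≠ 0 := by rintro h; simp [h] at hdet
  rw [isConsistentPath_iff hD] at hp hq
  obtain ⟨n, v, hv, hvm⟩ := hasMandatoryPath hx hy hD hε
  have hnp : np ≤ n :=
    hpmin n v ((isConsistentPath_iff hD).2 ⟨hv, fun i hi0 hin => (hvm i hi0 hin).1⟩)
  intro i hi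
  rcases Nat.eq_zero_or_pos i with rfl | hi0
  · exact ⟨0, Nat.zero_le nq, Or.inl (by rw [hp.1.1, hq.1.1])⟩
  rcases hi.eq_or_lt with rfl | hinp
  · exact ⟨nq, le_rfl, Or.inl (by rw [hp.1.2.1, hq.1.2.1])⟩
  obtain ⟨l, hl0, hln, hpl⟩ := hv.exists_eq_or_eq_neg_of_le hnp
    (fun l hl0 hln => hp.1.exists_eq_or_eq_neg_of_isMandatory hp.2 (hvm l hl0 hln)) hi0 hinp
  obtain ⟨j, -, hjn, hqj⟩ := hq.1.exists_eq_or_eq_neg_of_isMandatory hq.2 (hvm l hl0 hln)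
  exact ⟨j, hjn.le, eq_or_eq_neg_trans hpl (eq_or_eq_neg_symm hqj)⟩
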